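/- Let R be a commutative ring, M an R-module, T an R-linear endomorphism of M, and d ≥ 1 a natural number. Define the R-linear endomorphism S of the direct sum M^⊕d by S(m₁, m₂, …, m_d) = (T m_d, m₁, …, m_{d−1}). If a polynomial p ∈ R[x] satisfies p(T) = 0 as an endomorphism of M, then q(S) = 0 as an endomorphism of M^⊕d, where q ∈ R[x] is the polynomial q(x) = p(x^d). -/
import Mathlib


/-- Let `T` be an endomorphism of an `R`-module `M`, `d ≥ 1`, and let `S` be the endomorphism of
`M^⊕d` given by `S(m₁, …, m_d) = (T m_d, m₁, …, m_{d-1})`.  If `p(T) = 0` for `p ∈ R[x]`, then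
`q(S) = 0` where `q(x) = p(x^d)`. -/
theorem aeval_cyclic_shift
    (R : Type*) [CommRing R] (M : Type*) [AddCommGroup M] [Module R M]
    (T : Module.End R M) (d : ℕ) (hd : 1 ≤ d)
    (S : Module.End R (Fin d → M))
    (hS : ∀ (v : Fin d → M) (i : Fin d),
      S v i = if (i : ℕ) = 0 then T (v ⟨d - 1, by omega⟩)
              else v ⟨(i : ℕ) - 1, lt_of_le_of_lt (Nat.sub_le _ _) i.isLt⟩)
    (p : Polynomial R) (hp : Polynomial.aeval T p = 0) :
    Polynomial.aeval S (p.comp (Polynomial.X ^ d)) = 0 := by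
  have key : ∀ k, k ≤ d → ∀ (v : Fin d → M) (i : Fin d),
      (S ^ k) v i = if h : (i : ℕ) < k
        then T (v ⟨(i : ℕ) + d - k, by have := i.isLt; omega⟩)
        else v ⟨(i : ℕ) - k, by have := i.isLt; omega⟩ := by
    intro k
    induction k with
    | zero => intro _ v i; simp
    | succ k ih =>
      intro hk v i
      have hk' : k ≤ d := by omega
      have hstep : (S ^ (k + 1)) v i = S ((S ^ k) v) i := by
        rw [pow_succ']
        rfl
      rw [hstep, hS]
      by_cases hi0 : (i : ℕ) = 0
      · simp only [hi0, if_true]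
        rw [ih hk']
        have hlt : ¬ ((⟨d - 1, by omega⟩ : Fin d) : ℕ) < k := by
          simp only [Fin.val_mk]; omega
        rw [dif_neg hlt]
        rw [dif_pos (by omega : (0 : ℕ) < k + 1)]
        exact congrArg (T ∘ v) (by rw [Fin.ext_iff]; simp only [Fin.val_mk]; omega)
      · rw [if_neg hi0, ih hk']
        have hivlt := i.isLt
        by_cases hik : ((⟨(i : ℕ) - 1, lt_of_le_of_lt (Nat.sub_le _ _) i.isLt⟩ : Fin d) : ℕ) < k
        · rw [dif_pos hik]
          simp only [Fin.val_mk] at hik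
          rw [dif_pos (by omega : (i : ℕ) < k + 1)]
          exact congrArg (T ∘ v) (by rw [Fin.ext_iff]; simp only [Fin.val_mk]; omega)
        · rw [dif_neg hik]
          simp only [Fin.val_mk] at hik
          rw [dif_neg (by omega : ¬ (i : ℕ) < k + 1)]
          exact congrArg v (by rw [Fin.ext_iff]; simp only [Fin.val_mk]; omega)
  have hSd : ∀ (v : Fin d → M) (i : Fin d), (S ^ d) v i = T (v i) := by
    intro v i
    rw [key d le_rfl v i, dif_pos i.isLt]
    exact congrArg (T ∘ v) (by rw [Fin.ext_iff]; simp only [Fin.val_mk]; have := i.isLt; omega)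
  have hpow : ∀ n (v : Fin d → M) (i : Fin d), ((S ^ d) ^ n) v i = (T ^ n) (v i) := by
    intro n
    induction n with
    | zero => intro v i; simp
    | succ n ih =>
      intro v i
      have hstep : ((S ^ d) ^ (n + 1)) v i = ((S ^ d) ^ n) ((S ^ d) v) i := by
        rw [pow_succ]
        rfl
      rw [hstep, ih, hSd]
      rw [pow_succ]
      rfl
  have h2 : ∀ (q : Polynomial R) (v : Fin d → M) (i : Fin d),
      (Polynomial.aeval (S ^ d) q) v i = (Polynomial.aeval T q) (v i) := by
    intro q
    induction q using Polynomial.induction_on' with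
    | add f g hf hg =>
      intro v i
      simp only [map_add, LinearMap.add_apply, Pi.add_apply, hf, hg]
    | monomial n a =>
      intro v i
      simp only [Polynomial.aeval_monomial, Module.End.mul_apply,
        Module.algebraMap_end_apply, Pi.smul_apply, hpow]
  rw [Polynomial.aeval_comp, map_pow, Polynomial.aeval_X]
  apply LinearMap.ext
  intro v
  funext i
  rw [h2, hp]
  simp
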